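/- arXiv:1610.02957 — 4 statements merged into one kernel-verified Lean document; each statement's English description precedes it below -/
import Mathlib

section
/- Let G be a d-regular graph with adjacency matrix G on n vertices and m = nd/2 edges, and let U_k denote the Chebyshev polynomial of the second kind. Then the characteristic polynomial of the k-th subdivision of G (each edge replaced by a path with k internal vertices) satisfies φ(S_k(G), x) = (U_k(x/2))^{m−n} · φ(G, x·U_k(x/2) − d·U_{k−1}(x/2)). -/
open Matrix Polynomial

open Classical in
/-- Adjacency matrix of the graph on `Fin n` whose edge list is `ε`. -/
noncomputable def edgeListAdj {n m : ℕ} (ε : Fin m → Fin n × Fin n) :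
    Matrix (Fin n) (Fin n) ℝ :=
  fun u v => if ∃ j, ε j = (u, v) ∨ ε j = (v, u) then 1 else 0

/-- Adjacency matrix of the `k`-th subdivision: each edge `ε j = (u, v)` is replaced
by a path `u, (j,0), (j,1), …, (j,k-1), v` with `k` new internal vertices. -/
def subdivisionAdj {n m : ℕ} (ε : Fin m → Fin n × Fin n) (k : ℕ) :
    Matrix (Fin n ⊕ Fin m × Fin k) (Fin n ⊕ Fin m × Fin k) ℝ :=
  fun a b =>
    match a, b with
    | Sum.inl _, Sum.inl _ => 0
    | Sum.inl u, Sum.inr (j, i) =>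
        if (i.val = 0 ∧ (ε j).1 = u) ∨ (i.val = k - 1 ∧ (ε j).2 = u) then 1 else 0
    | Sum.inr (j, i), Sum.inl u =>
        if (i.val = 0 ∧ (ε j).1 = u) ∨ (i.val = k - 1 ∧ (ε j).2 = u) then 1 else 0
    | Sum.inr (j, i), Sum.inr (j', i') =>
        if j = j' ∧ (i.val + 1 = i'.val ∨ i'.val + 1 = i.val) then 1 else 0

/-!
Order the vertices of `S_k(G)` as the `n` branch vertices followed by the `k` inner vertices of
each of the `m` paths. Then `x I - A(S_k(G))` has diagonal blocks `x I` and
`D = I_m ⊗ (x I - A(P_k))` and off-diagonal blocks `-B`, `-Bᵀ`, where `B` joins the two ends of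
each path to the endpoints of its edge. Put `s_j = U_j(x/2)`, which is `Chebyshev.S j` at `x`.
The three-term recurrence gives `det (x I - A(P_k)) = s_k`, and it also shows that
`x I - A(P_k)` sends `(s_0, …, s_{k-1})` and its reversal to `s_k` times the unit vector at the
last, resp. first, inner vertex. Assembling these vectors edge by edge gives `Z` with
`D Zᵀ = s_k Bᵀ`, a stand-in for `s_k D⁻¹ Bᵀ`; one block multiplication then yields
`det (x I - A(S_k(G))) s_k^n = det (s_k x I - B Zᵀ) s_k^m` without dividing by `s_k`.
Finally `B Zᵀ = s_{k-1} Δ + A'`, where `Δ` is the degree matrix and `A'` the adjacency matrix of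
the edge list counted with multiplicity; `d`-regularity with `2m = nd` forces `A' = A(G)` and
`Δ = d I`.
-/

open scoped Kronecker

theorem Matrix.det_fromBlocks_mul_pow_card_of_mul_eq_smul {R m n : Type*} [CommRing R]
    [Fintype m] [DecidableEq m] [Fintype n] [DecidableEq n]
    (A : Matrix m m R) (B : Matrix m n R) (C : Matrix n m R) (D : Matrix n n R)
    (Z : Matrix n m R) (t : R) (hZ : D * Z = t • C) :
    (fromBlocks A B C D).det * t ^ Fintype.card m = (t • A - B * Z).det * D.det := by
  have hmul : fromBlocks A B C D * fromBlocks (t • 1) 0 (-Z) 1 =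
      fromBlocks (t • A - B * Z) B 0 D := by
    simp [fromBlocks_multiply, hZ, sub_eq_add_neg]
  have := congrArg det hmul
  rwa [det_mul, det_fromBlocks_zero₁₂, det_fromBlocks_zero₂₁, det_smul, det_one, det_one,
    mul_one, mul_one] at this

theorem Polynomial.Chebyshev.U_eval_div_two {K : Type*} [Field K] [NeZero (2 : K)] (n : ℤ)
    (x : K) : (U K n).eval (x / 2) = (S K n).eval x := by
  rw [← S_comp_two_mul_X, eval_comp]
  simp [mul_div_cancel₀ x (two_ne_zero' K)]

namespace SimpleGraph

instance (k : ℕ) : DecidableRel (pathGraph k).Adj := fun _ _ =>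
  decidable_of_iff' _ pathGraph_adj

variable {R : Type*} [CommRing R]

theorem smul_one_sub_adjMatrix_pathGraph_submatrix_succ (x : R) (k : ℕ) :
    (x • 1 - (pathGraph (k + 1)).adjMatrix R).submatrix Fin.succ Fin.succ =
      x • 1 - (pathGraph k).adjMatrix R := by
  ext i j
  simp [pathGraph_adj, one_apply]

theorem det_smul_one_sub_adjMatrix_pathGraph_add_two (x : R) (k : ℕ) :
    (x • 1 - (pathGraph (k + 2)).adjMatrix R).det =
      x * (x • 1 - (pathGraph (k + 1)).adjMatrix R).det -
        (x • 1 - (pathGraph k).adjMatrix R).det := by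
  set M := x • 1 - (pathGraph (k + 2)).adjMatrix R
  have hminor : (M.submatrix Fin.succ (Fin.succAbove 1)).det =
      -(x • 1 - (pathGraph k).adjMatrix R).det := by
    have hcols : Fin.succAbove (1 : Fin (k + 2)) ∘ Fin.succ = Fin.succ ∘ Fin.succ :=
      funext Fin.one_succAbove_succ
    rw [det_succ_column_zero, Fin.sum_univ_succ, Finset.sum_eq_zero]
    · simp [M, pathGraph_adj, one_apply]
      rw [hcols, ← submatrix_submatrix, smul_one_sub_adjMatrix_pathGraph_submatrix_succ,
        smul_one_sub_adjMatrix_pathGraph_submatrix_succ]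
    · intro i _
      simp [M, pathGraph_adj, one_apply]
  rw [det_succ_row_zero, Fin.sum_univ_succ, Fin.sum_univ_succ, Finset.sum_eq_zero]
  · simp [M, hminor, pathGraph_adj, one_apply, smul_one_sub_adjMatrix_pathGraph_submatrix_succ]
    ring
  · intro j _
    simp [M, pathGraph_adj, one_apply, (Fin.succ_ne_zero _).symm]

theorem det_smul_one_sub_adjMatrix_pathGraph (x : R) (k : ℕ) :
    (x • 1 - (pathGraph k).adjMatrix R).det = (Chebyshev.S R k).eval x := by
  induction k using Nat.twoStepInduction with
  | zero => simp
  | one => simp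
  | more k ih₀ ih₁ =>
    rw [det_smul_one_sub_adjMatrix_pathGraph_add_two, ih₀, ih₁]
    push_cast
    simp [Chebyshev.S_add_two]

theorem sum_adjMatrix_pathGraph_mul {k : ℕ} (g : ℕ → R) (i : Fin k) :
    ∑ j, (pathGraph k).adjMatrix R i j * g j =
      (if (i : ℕ) + 1 < k then g (i + 1) else 0) + (if (i : ℕ) = 0 then 0 else g (i - 1)) := by
  obtain ⟨i, hi⟩ := i
  have hsplit : ∀ n : ℕ, (if i + 1 = n ∨ n + 1 = i then (1 : R) else 0) * g n =
      (if i + 1 = n then g n else 0) + (if n + 1 = i then g n else 0) := by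
    intro n
    by_cases h₁ : i + 1 = n <;> by_cases h₂ : n + 1 = i <;> simp [h₁, h₂]
    omega
  simp only [adjMatrix_apply, pathGraph_adj]
  rw [Fin.sum_univ_eq_sum_range (fun n => (if i + 1 = n ∨ n + 1 = i then (1 : R) else 0) * g n),
    Finset.sum_congr rfl fun n _ => hsplit n, Finset.sum_add_distrib, Finset.sum_ite_eq]
  rcases i with _ | i
  · simp
  · simp [Finset.mem_range]
    omega

theorem smul_one_sub_adjMatrix_pathGraph_mulVec (x : R) (k : ℕ) (f : ℤ → R)
    (hf : ∀ j, x * f j = f (j + 1) + f (j - 1)) :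
    (x • 1 - (pathGraph (k + 1)).adjMatrix R) *ᵥ (fun i : Fin (k + 1) => f (i : ℕ)) =
      Pi.single 0 (f (-1)) + Pi.single (Fin.last k) (f (k + 1)) := by
  ext ⟨i, hi⟩
  rw [sub_mulVec, smul_mulVec, one_mulVec]
  simp only [Pi.sub_apply, Pi.smul_apply, smul_eq_mul, Pi.add_apply, mulVec, dotProduct]
  rw [sum_adjMatrix_pathGraph_mul (fun n : ℕ => f n)]
  simp only [Pi.single_apply, Fin.ext_iff, Fin.val_zero, Fin.val_last]
  have hrec := hf i
  rcases Nat.eq_zero_or_pos i with rfl | hpos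
  · rcases Nat.eq_zero_or_pos k with rfl | hk
    · simp at hrec ⊢
      linear_combination hrec
    · simp [hk, hk.ne] at hrec ⊢
      linear_combination hrec
  · have hcast : ((i - 1 : ℕ) : ℤ) = i - 1 := by omega
    rcases (Nat.lt_succ_iff.mp hi).lt_or_eq with hik | rfl
    · simp [hpos.ne', hik, hik.ne, hcast]
      linear_combination hrec
    · simp [hpos.ne', hcast]
      linear_combination hrec

theorem smul_one_sub_adjMatrix_pathGraph_mulVec_chebyshevS (x : R) (k : ℕ) :
    (x • 1 - (pathGraph (k + 1)).adjMatrix R) *ᵥ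
        (fun i : Fin (k + 1) => (Chebyshev.S R (i : ℕ)).eval x) =
      (Chebyshev.S R (k + 1)).eval x • Pi.single (Fin.last k) 1 := by
  rw [smul_one_sub_adjMatrix_pathGraph_mulVec x k (fun j => (Chebyshev.S R j).eval x),
    ← Pi.single_smul', smul_eq_mul, mul_one]
  · simp [Chebyshev.S_neg_one]
  · intro j
    simp [Chebyshev.S_add_one R j]

theorem smul_one_sub_adjMatrix_pathGraph_mulVec_chebyshevS_rev (x : R) (k : ℕ) :
    (x • 1 - (pathGraph (k + 1)).adjMatrix R) *ᵥ
        (fun i : Fin (k + 1) => (Chebyshev.S R (k - (i : ℕ))).eval x) =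
      (Chebyshev.S R (k + 1)).eval x • Pi.single 0 1 := by
  rw [smul_one_sub_adjMatrix_pathGraph_mulVec x k (fun j => (Chebyshev.S R (k - j)).eval x),
    ← Pi.single_smul', smul_eq_mul, mul_one]
  · simp [Chebyshev.S_neg_one]
  · intro j
    rw [show (k : ℤ) - (j - 1) = k - j + 1 by ring, show (k : ℤ) - (j + 1) = k - j - 1 by ring,
      Chebyshev.S_add_one]
    simp

end SimpleGraph

namespace Matrix

variable (R : Type*) {V E ι : Type*} [CommRing R] [DecidableEq V]

def incidenceOf (f : E → V) : Matrix V E R :=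
  of fun u j => if f j = u then 1 else 0

/-- Each `e : E` carries a gadget with vertex set `ι`, hooked to `src e` with weights `s` and to
`tgt e` with weights `t`. -/
def attachMatrix (src tgt : E → V) (s t : ι → R) : Matrix V (E × ι) R :=
  of fun u p => (if src p.1 = u then s p.2 else 0) + (if tgt p.1 = u then t p.2 else 0)

variable {R}

@[simp]
theorem incidenceOf_apply (f : E → V) (u : V) (j : E) :
    incidenceOf R f u j = if f j = u then 1 else 0 := rfl

@[simp]
theorem attachMatrix_apply (src tgt : E → V) (s t : ι → R) (u : V) (p : E × ι) :
    attachMatrix R src tgt s t u p =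
      (if src p.1 = u then s p.2 else 0) + (if tgt p.1 = u then t p.2 else 0) := rfl

theorem incidenceOf_transpose_mulVec_one [Fintype V] (f : E → V) :
    (incidenceOf R f)ᵀ *ᵥ 1 = 1 := by
  ext j
  simp [mulVec, dotProduct]

theorem sum_incidenceOf_mulVec_one [Fintype V] [Fintype E] (f : E → V) :
    ∑ u, (incidenceOf R f *ᵥ 1) u = Fintype.card E := by
  simp only [mulVec, dotProduct, incidenceOf_apply, Pi.one_apply, mul_one]
  rw [Finset.sum_comm]
  simp

theorem incidenceOf_mul_transpose_mulVec_one [Fintype V] [Fintype E] (f g : E → V) :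
    (incidenceOf R f * (incidenceOf R g)ᵀ) *ᵥ 1 = incidenceOf R f *ᵥ 1 := by
  rw [← mulVec_mulVec, incidenceOf_transpose_mulVec_one]

theorem incidenceOf_mul_transpose_self [Fintype E] (f : E → V) :
    incidenceOf R f * (incidenceOf R f)ᵀ = diagonal (incidenceOf R f *ᵥ 1) := by
  ext u v
  by_cases huv : u = v
  · subst huv
    simp +contextual [mul_apply, mulVec, dotProduct]
  · simp [mul_apply, huv]
    exact Finset.sum_eq_zero fun j _ => by grind

theorem attachMatrix_smul (src tgt : E → V) (c : R) (s t : ι → R) :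
    attachMatrix R src tgt (c • s) (c • t) = c • attachMatrix R src tgt s t := by
  ext u p
  simp [mul_add]

theorem one_kronecker_mul_attachMatrix_transpose [Fintype E] [DecidableEq E] [Fintype ι]
    (P : Matrix ι ι R) (src tgt : E → V) (a b : ι → R) :
    ((1 : Matrix E E R) ⊗ₖ P) * (attachMatrix R src tgt a b)ᵀ =
      (attachMatrix R src tgt (P *ᵥ a) (P *ᵥ b))ᵀ := by
  ext ⟨j, i⟩ v
  simp only [mul_apply, Fintype.sum_prod_type, kronecker_apply, one_apply, ite_mul, one_mul,
    zero_mul]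
  simp [mulVec, dotProduct, mul_add, Finset.sum_add_distrib, mul_ite]

theorem attachMatrix_mul_attachMatrix_transpose [Fintype E] [Fintype ι] (src tgt : E → V)
    (s t a b : ι → R) :
    attachMatrix R src tgt s t * (attachMatrix R src tgt a b)ᵀ =
      (s ⬝ᵥ a) • (incidenceOf R src * (incidenceOf R src)ᵀ) +
        (s ⬝ᵥ b) • (incidenceOf R src * (incidenceOf R tgt)ᵀ) +
        (t ⬝ᵥ a) • (incidenceOf R tgt * (incidenceOf R src)ᵀ) +
        (t ⬝ᵥ b) • (incidenceOf R tgt * (incidenceOf R tgt)ᵀ) := by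
  ext u v
  simp only [mul_apply, Fintype.sum_prod_type, Matrix.add_apply, Matrix.smul_apply, smul_eq_mul,
    dotProduct, Finset.sum_mul, Finset.mul_sum, ← Finset.sum_add_distrib]
  refine Finset.sum_congr rfl fun j _ => Finset.sum_congr rfl fun i _ => ?_
  simp only [transpose_apply, attachMatrix_apply, incidenceOf_apply]
  split_ifs <;> ring

end Matrix

section EdgeList

open Finset

variable {n m : ℕ} (ε : Fin m → Fin n × Fin n)

def edgeListMultiAdj : Matrix (Fin n) (Fin n) ℝ :=
  incidenceOf ℝ (Prod.fst ∘ ε) * (incidenceOf ℝ (Prod.snd ∘ ε))ᵀ +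
    incidenceOf ℝ (Prod.snd ∘ ε) * (incidenceOf ℝ (Prod.fst ∘ ε))ᵀ

theorem edgeListMultiAdj_mulVec_one :
    edgeListMultiAdj ε *ᵥ 1 =
      incidenceOf ℝ (Prod.fst ∘ ε) *ᵥ 1 + incidenceOf ℝ (Prod.snd ∘ ε) *ᵥ 1 := by
  rw [edgeListMultiAdj, add_mulVec, incidenceOf_mul_transpose_mulVec_one,
    incidenceOf_mul_transpose_mulVec_one]

theorem edgeListMultiAdj_apply (u v : Fin n) :
    edgeListMultiAdj ε u v = #{j | ε j = (u, v)} + #{j | ε j = (v, u)} := by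
  simp [edgeListMultiAdj, mul_apply, Prod.ext_iff, ← ite_and, and_comm]

theorem edgeListAdj_le_edgeListMultiAdj (u v : Fin n) :
    edgeListAdj ε u v ≤ edgeListMultiAdj ε u v := by
  rw [edgeListMultiAdj_apply]
  unfold edgeListAdj
  split_ifs with h
  · obtain ⟨j, hj⟩ := h
    have : 0 < #{j | ε j = (u, v)} + #{j | ε j = (v, u)} := by
      rcases hj with hj | hj
      · exact Nat.add_pos_left (Finset.card_pos.2 ⟨j, by simp [hj]⟩) _
      · exact Nat.add_pos_right _ (Finset.card_pos.2 ⟨j, by simp [hj]⟩)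
    exact_mod_cast this
  · positivity

/-- The left side is entrywise at most the right one and both have total sum `2m = nd`. -/
theorem edgeListAdj_eq_edgeListMultiAdj {d : ℕ}
    (hreg : ∀ u : Fin n, ∑ v : Fin n, edgeListAdj ε u v = d) (hm : 2 * m = n * d) :
    edgeListAdj ε = edgeListMultiAdj ε := by
  have hle := edgeListAdj_le_edgeListMultiAdj ε
  have htotal : ∑ u, ∑ v, edgeListAdj ε u v = ∑ u, ∑ v, edgeListMultiAdj ε u v := by
    have hrow : ∀ u, ∑ v, edgeListMultiAdj ε u v = (edgeListMultiAdj ε *ᵥ 1) u := by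
      simp [mulVec, dotProduct]
    simp only [hreg, hrow, edgeListMultiAdj_mulVec_one, Pi.add_apply, Finset.sum_add_distrib,
      sum_incidenceOf_mulVec_one, Fintype.card_fin, Finset.sum_const, Finset.card_univ,
      nsmul_eq_mul]
    exact_mod_cast (by linarith : n * d = m + m)
  have hrow_eq := (Finset.sum_eq_sum_iff_of_le fun u _ => Finset.sum_le_sum fun v _ => hle u v).1
    htotal
  ext u v
  exact (Finset.sum_eq_sum_iff_of_le fun v _ => hle u v).1 (hrow_eq u (Finset.mem_univ u)) v
    (Finset.mem_univ v)

theorem incidenceOf_mul_transpose_self_add_eq_smul_one {d : ℕ}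
    (hreg : ∀ u : Fin n, ∑ v : Fin n, edgeListAdj ε u v = d) (hm : 2 * m = n * d) :
    incidenceOf ℝ (Prod.fst ∘ ε) * (incidenceOf ℝ (Prod.fst ∘ ε))ᵀ +
        incidenceOf ℝ (Prod.snd ∘ ε) * (incidenceOf ℝ (Prod.snd ∘ ε))ᵀ =
      (d : ℝ) • 1 := by
  have hdeg : edgeListAdj ε *ᵥ 1 = fun _ => (d : ℝ) := by
    ext u
    simp [mulVec, dotProduct, hreg]
  rw [edgeListAdj_eq_edgeListMultiAdj ε hreg hm, edgeListMultiAdj_mulVec_one] at hdeg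
  rw [incidenceOf_mul_transpose_self, incidenceOf_mul_transpose_self, diagonal_add,
    smul_one_eq_diagonal, ← hdeg]
  rfl

def subdivisionBranchBlock (k : ℕ) : Matrix (Fin n) (Fin m × Fin (k + 1)) ℝ :=
  attachMatrix ℝ (Prod.fst ∘ ε) (Prod.snd ∘ ε) (Pi.single 0 1) (Pi.single (Fin.last k) 1)

noncomputable def chebyshevBranchBlock (x : ℝ) (k : ℕ) :
    Matrix (Fin n) (Fin m × Fin (k + 1)) ℝ :=
  attachMatrix ℝ (Prod.fst ∘ ε) (Prod.snd ∘ ε)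
    (fun i => (Chebyshev.S ℝ (k - (i : ℕ))).eval x)
    (fun i => (Chebyshev.S ℝ (i : ℕ)).eval x)

theorem smul_one_sub_subdivisionAdj_eq_fromBlocks (hloop : ∀ j, (ε j).1 ≠ (ε j).2) (x : ℝ)
    (k : ℕ) :
    x • 1 - subdivisionAdj ε (k + 1) =
      fromBlocks (x • 1) (-subdivisionBranchBlock ε k) (-(subdivisionBranchBlock ε k)ᵀ)
        (1 ⊗ₖ (x • 1 - (SimpleGraph.pathGraph (k + 1)).adjMatrix ℝ)) := by
  ext (u | ⟨j, i⟩) (v | ⟨j', i'⟩)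
  · simp [subdivisionAdj, one_apply]
  · have := hloop j'
    simp only [subdivisionAdj, subdivisionBranchBlock, Matrix.sub_apply, Matrix.smul_apply,
      Matrix.neg_apply, fromBlocks_apply₁₂, attachMatrix_apply, one_apply, Function.comp_apply,
      Pi.single_apply, Fin.ext_iff, Fin.val_zero, Fin.val_last, reduceCtorEq, if_false,
      smul_zero, zero_sub, Nat.add_sub_cancel]
    split_ifs <;> grind
  · have := hloop j
    simp only [subdivisionAdj, subdivisionBranchBlock, Matrix.sub_apply, Matrix.smul_apply,
      Matrix.neg_apply, fromBlocks_apply₂₁, transpose_apply, attachMatrix_apply, one_apply,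
      Function.comp_apply, Pi.single_apply, Fin.ext_iff, Fin.val_zero, Fin.val_last,
      reduceCtorEq, if_false, smul_zero, zero_sub, Nat.add_sub_cancel]
    split_ifs <;> grind
  · simp [subdivisionAdj, one_apply, SimpleGraph.pathGraph_adj, Fin.ext_iff]
    split_ifs <;> grind

theorem one_kronecker_mul_chebyshevBranchBlock_transpose (x : ℝ) (k : ℕ) :
    ((1 : Matrix (Fin m) (Fin m) ℝ) ⊗ₖ
        (x • 1 - (SimpleGraph.pathGraph (k + 1)).adjMatrix ℝ)) * (chebyshevBranchBlock ε x k)ᵀ =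
      (Chebyshev.S ℝ (k + 1)).eval x • (subdivisionBranchBlock ε k)ᵀ := by
  rw [chebyshevBranchBlock, one_kronecker_mul_attachMatrix_transpose,
    SimpleGraph.smul_one_sub_adjMatrix_pathGraph_mulVec_chebyshevS_rev,
    SimpleGraph.smul_one_sub_adjMatrix_pathGraph_mulVec_chebyshevS, attachMatrix_smul,
    transpose_smul, subdivisionBranchBlock]

theorem subdivisionBranchBlock_mul_chebyshevBranchBlock_transpose {d : ℕ}
    (hreg : ∀ u : Fin n, ∑ v : Fin n, edgeListAdj ε u v = d) (hm : 2 * m = n * d) (x : ℝ)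
    (k : ℕ) :
    subdivisionBranchBlock ε k * (chebyshevBranchBlock ε x k)ᵀ =
      ((Chebyshev.S ℝ k).eval x * d) • 1 + edgeListAdj ε := by
  rw [subdivisionBranchBlock, chebyshevBranchBlock, attachMatrix_mul_attachMatrix_transpose,
    edgeListAdj_eq_edgeListMultiAdj ε hreg hm, edgeListMultiAdj, mul_smul,
    ← incidenceOf_mul_transpose_self_add_eq_smul_one ε hreg hm]
  simp only [single_dotProduct, one_mul, Fin.val_zero, Fin.val_last, CharP.cast_eq_zero,
    sub_zero, sub_self, Chebyshev.S_zero, eval_one, one_smul]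
  module

end EdgeList

theorem charpoly_subdivision_general {n m d k : ℕ} (hk : 0 < k)
    (ε : Fin m → Fin n × Fin n)
    (hloop : ∀ j, (ε j).1 ≠ (ε j).2)
    (hreg : ∀ u : Fin n, ∑ v : Fin n, edgeListAdj ε u v = d)
    (hm : 2 * m = n * d) (x : ℝ) :
    (x • (1 : Matrix (Fin n ⊕ Fin m × Fin k) (Fin n ⊕ Fin m × Fin k) ℝ)
        - subdivisionAdj ε k).det * ((Polynomial.Chebyshev.U ℝ k).eval (x / 2)) ^ n
      = ((Polynomial.Chebyshev.U ℝ k).eval (x / 2)) ^ m *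
        ((x * (Polynomial.Chebyshev.U ℝ k).eval (x / 2)
            - d * (Polynomial.Chebyshev.U ℝ ((k : ℤ) - 1)).eval (x / 2))
              • (1 : Matrix (Fin n) (Fin n) ℝ) - edgeListAdj ε).det := by
  obtain ⟨k, rfl⟩ : ∃ k', k = k' + 1 := ⟨k - 1, by omega⟩
  have hZ := congrArg Neg.neg (one_kronecker_mul_chebyshevBranchBlock_transpose ε x k)
  rw [← Matrix.mul_neg, ← smul_neg] at hZ
  have hdet :=
    det_fromBlocks_mul_pow_card_of_mul_eq_smul (x • 1) (-subdivisionBranchBlock ε k) _ _ _ _ hZ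
  rw [← smul_one_sub_subdivisionAdj_eq_fromBlocks ε hloop, Matrix.neg_mul, Matrix.mul_neg,
    neg_neg, subdivisionBranchBlock_mul_chebyshevBranchBlock_transpose ε hreg hm, det_kronecker,
    det_one, one_pow, one_mul, SimpleGraph.det_smul_one_sub_adjMatrix_pathGraph,
    Fintype.card_fin, Fintype.card_fin] at hdet
  simp only [Chebyshev.U_eval_div_two]
  push_cast
  rw [add_sub_cancel_right, hdet, mul_comm]
  congr 2
  module

theorem charpoly_subdivision {n m d k : ℕ} (hk : 0 < k)
    (ε : Fin m → Fin n × Fin n)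
    (hloop : ∀ j, (ε j).1 ≠ (ε j).2)
    (hinj : Function.Injective fun j => Sym2.mk (ε j))
    (hreg : ∀ u : Fin n, ∑ v : Fin n, edgeListAdj ε u v = d)
    (hm : 2 * m = n * d) (x : ℝ) :
    (x • (1 : Matrix (Fin n ⊕ Fin m × Fin k) (Fin n ⊕ Fin m × Fin k) ℝ)
        - subdivisionAdj ε k).det * ((Polynomial.Chebyshev.U ℝ k).eval (x / 2)) ^ n
      = ((Polynomial.Chebyshev.U ℝ k).eval (x / 2)) ^ m *
        ((x * (Polynomial.Chebyshev.U ℝ k).eval (x / 2)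
            - d * (Polynomial.Chebyshev.U ℝ ((k : ℤ) - 1)).eval (x / 2))
              • (1 : Matrix (Fin n) (Fin n) ℝ) - edgeListAdj ε).det :=
  charpoly_subdivision_general hk ε hloop hreg hm x
end

section
/- Let n ≥ 3 and 1 ≤ k, ℓ < n/2 with k ≠ ℓ. The eigenvalues of the I-graph I(n; k, ℓ) are exactly, for j = 1, …, n, the 2n numbers cos(2jkπ/n) + cos(2jℓπ/n) ± sqrt((cos(2jkπ/n) − cos(2jℓπ/n))² + 1). -/
open Matrix Real

/-- Adjacency matrix of the circulant graph `C_n(k)` on `ZMod n`,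
with edges `{u, u ± k}`, over `ℝ`. -/
def circulantAdjR (n k : ℕ) [NeZero n] : Matrix (ZMod n) (ZMod n) ℝ :=
  fun u v => if v = u + (k : ZMod n) ∨ v = u - (k : ZMod n) then 1 else 0

/-- Adjacency matrix of the I-graph `I(n; k, l)`. -/
def IGraphAdj (n k l : ℕ) [NeZero n] :
    Matrix (ZMod n ⊕ ZMod n) (ZMod n ⊕ ZMod n) ℝ :=
  Matrix.fromBlocks (circulantAdjR n k) 1 1 (circulantAdjR n l)

/-!
The two diagonal blocks of `x • 1 - IGraphAdj n k l` are `x • 1 - C_n(k)` and `x • 1 - C_n(l)`,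
and the off-diagonal blocks are `-1`, so its determinant is that of
`(x • 1 - C_n(k)) * (x • 1 - C_n(l)) - 1`. Both circulants are diagonalised by the Fourier matrix
`(ζ^(u j))`, with eigenvalues `2 cos (2 π j k / n)` and `2 cos (2 π j l / n)`. The determinant is
therefore `∏ j, ((x - 2 cos (2 π j k / n)) * (x - 2 cos (2 π j l / n)) - 1)`, and each factor is
a quadratic in `x` whose roots are the two claimed eigenvalues.
-/

open ZMod

namespace Matrix

variable {m R : Type*} [Fintype m] [DecidableEq m] [CommRing R]

theorem det_fromBlocks_neg_one (A D : Matrix m m R) :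
    (fromBlocks A (-1) (-1) D).det = (A * D - 1).det := by
  -- Block row operations: add `A` times the second block row to the first, then rotate the rows.
  have hrot : (fromBlocks 0 (-1) 1 0 : Matrix (m ⊕ m) (m ⊕ m) R).det = 1 := by
    have hshears : (fromBlocks 0 (-1) 1 0 : Matrix (m ⊕ m) (m ⊕ m) R) =
        fromBlocks 1 (-1) 0 1 * fromBlocks 1 0 1 1 * fromBlocks 1 (-1) 0 1 := by
      simp [fromBlocks_multiply]
    simp [hshears]
  have hreduce : fromBlocks 0 (-1) 1 0 * fromBlocks 1 A 0 1 * fromBlocks A (-1) (-1) D =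
      fromBlocks 1 (-D) 0 (A * D - 1) := by
    simp [fromBlocks_multiply, sub_eq_neg_add]
  simpa [hrot, det_fromBlocks_zero₂₁] using congrArg det hreduce

theorem det_eq_prod_of_mul_eq_mul_diagonal {M F : Matrix m m R} {d : m → R} (hF : IsUnit F)
    (h : M * F = F * diagonal d) : M.det = ∏ i, d i := by
  have hdet := congrArg det h
  rw [det_mul, det_mul, mul_comm, det_diagonal] at hdet
  exact (hF.map detMonoidHom).mul_left_cancel hdet

variable {A B F : Matrix m m R} {a b : m → R}

theorem smul_one_sub_mul_eq_mul_diagonal (hA : A * F = F * diagonal a) (x : R) :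
    (x • 1 - A) * F = F * diagonal (fun i => x - a i) := by
  rw [sub_mul, hA, smul_mul, one_mul, ← diagonal_sub, Matrix.mul_sub, ← smul_one_eq_diagonal,
    Matrix.mul_smul, Matrix.mul_one]

theorem mul_sub_one_mul_eq_mul_diagonal (hA : A * F = F * diagonal a)
    (hB : B * F = F * diagonal b) :
    (A * B - 1) * F = F * diagonal (fun i => a i * b i - 1) := by
  rw [sub_mul, Matrix.mul_assoc, hB, ← Matrix.mul_assoc, hA, Matrix.mul_assoc,
    diagonal_mul_diagonal, one_mul]
  ext i j
  simp [mul_diagonal, mul_sub]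

end Matrix

theorem ZMod.natCast_ne_neg_natCast {n k : ℕ} (hk : 0 < k) (hkn : 2 * k < n) :
    (k : ZMod n) ≠ -k := by
  rw [Ne, eq_neg_iff_add_eq_zero, ← Nat.cast_add, ZMod.natCast_eq_zero_iff]
  exact Nat.not_dvd_of_pos_of_lt (by omega) (by omega)

theorem ZMod.exists_iff_exists_mem_Icc_natCast {n : ℕ} [NeZero n] (P : ZMod n → Prop) :
    (∃ j, P j) ↔ ∃ m ∈ Finset.Icc 1 n, P m := by
  refine ⟨fun ⟨j, hj⟩ => ⟨(j - 1).val + 1, ?_, ?_⟩, fun ⟨m, _, hm⟩ => ⟨m, hm⟩⟩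
  · simpa [Nat.succ_le_iff] using (j - 1).val_lt
  · simpa using hj

section Fourier

variable {n : ℕ} [NeZero n]

variable (n) in
noncomputable def fourierMatrix : Matrix (ZMod n) (ZMod n) ℂ :=
  of fun u j => stdAddChar (u * j)

theorem fourierMatrix_mulVec (Φ : ZMod n → ℂ) : fourierMatrix n *ᵥ Φ = (n : ℂ) • 𝓕⁻ Φ := by
  ext u
  simp [fourierMatrix, mulVec, dotProduct, invDFT_apply, mul_comm u, ← mul_assoc,
    mul_inv_cancel₀ (NeZero.ne (n : ℂ))]

theorem isUnit_fourierMatrix : IsUnit (fourierMatrix n) := by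
  refine mulVec_injective_iff_isUnit.mp fun Φ Ψ h => ?_
  rw [fourierMatrix_mulVec, fourierMatrix_mulVec] at h
  exact 𝓕⁻.injective (smul_right_injective _ (NeZero.ne (n : ℂ)) h)

theorem circulant_mul_fourierMatrix (v : ZMod n → ℂ) :
    circulant v * fourierMatrix n = fourierMatrix n * diagonal (𝓕 v) := by
  ext u j
  rw [mul_diagonal, mul_apply, dft_apply, Finset.mul_sum]
  refine Fintype.sum_equiv (Equiv.subLeft u) _ _ fun w => ?_
  simp only [circulant_apply, fourierMatrix, of_apply, Equiv.subLeft_apply, smul_eq_mul]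
  rw [← mul_assoc, ← AddChar.map_add_eq_mul, mul_comm]
  ring_nf

end Fourier

section IGraph

variable {n : ℕ} [NeZero n]

variable (n) in
noncomputable def circulantSymbol (k : ℕ) : ZMod n → ℂ :=
  Pi.single (k : ZMod n) 1 + Pi.single (-(k : ZMod n)) 1

theorem circulantAdjR_map_ofReal {k : ℕ} (hk : (k : ZMod n) ≠ -k) :
    (circulantAdjR n k).map Complex.ofReal = circulant (circulantSymbol n k) := by
  ext u v
  simp only [map_apply, circulantAdjR, circulant_apply, circulantSymbol, Pi.add_apply,
    Pi.single_apply]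
  rw [apply_ite Complex.ofReal, Complex.ofReal_one, Complex.ofReal_zero]
  split_ifs <;> grind

theorem dft_circulantSymbol_natCast (k j : ℕ) :
    𝓕 (circulantSymbol n k) j = 2 * Real.cos (2 * j * k * π / n) := by
  have hsum : 𝓕 (circulantSymbol n k) j =
      stdAddChar ((-(k * j) : ℤ) : ZMod n) + stdAddChar ((k * j : ℤ) : ZMod n) := by
    simp [circulantSymbol, dft_apply, Pi.single_apply, mul_add, Finset.sum_add_distrib]
  rw [hsum, stdAddChar_coe, stdAddChar_coe, Complex.ofReal_cos, Complex.two_cos, add_comm]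
  congr 2 <;> push_cast <;> ring

theorem smul_one_sub_IGraphAdj (x : ℝ) (k l : ℕ) :
    x • 1 - IGraphAdj n k l =
      fromBlocks (x • 1 - circulantAdjR n k) (-1) (-1) (x • 1 - circulantAdjR n l) := by
  rw [IGraphAdj, ← fromBlocks_one, fromBlocks_smul, sub_eq_add_neg, fromBlocks_neg,
    fromBlocks_add]
  simp [sub_eq_add_neg]

theorem det_smul_one_sub_IGraphAdj {k l : ℕ} (hk : (k : ZMod n) ≠ -k) (hl : (l : ZMod n) ≠ -l)
    (x : ℝ) :
    ((x • 1 - IGraphAdj n k l).det : ℂ) =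
      ∏ j, ((x - 𝓕 (circulantSymbol n k) j) * (x - 𝓕 (circulantSymbol n l) j) - 1) := by
  have hdiag {m : ℕ} (hm : (m : ZMod n) ≠ -m) :
      ((x : ℂ) • 1 - (circulantAdjR n m).map Complex.ofReal) * fourierMatrix n =
        fourierMatrix n * diagonal (fun j => x - 𝓕 (circulantSymbol n m) j) := by
    rw [circulantAdjR_map_ofReal hm]
    exact smul_one_sub_mul_eq_mul_diagonal (circulant_mul_fourierMatrix _) _
  have hmap (m : ℕ) : Complex.ofRealHom.mapMatrix (x • 1 - circulantAdjR n m) =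
      (x : ℂ) • 1 - (circulantAdjR n m).map Complex.ofReal := by
    ext i j
    by_cases h : i = j <;> simp [h]
  rw [smul_one_sub_IGraphAdj, det_fromBlocks_neg_one, ← Complex.ofRealHom_eq_coe,
    RingHom.map_det, map_sub, map_mul, map_one, hmap, hmap]
  exact det_eq_prod_of_mul_eq_mul_diagonal isUnit_fourierMatrix
    (mul_sub_one_mul_eq_mul_diagonal (hdiag hk) (hdiag hl))

end IGraph

theorem sub_two_mul_mul_sub_two_mul_eq_one_iff (a b x : ℝ) :
    (x - 2 * a) * (x - 2 * b) = 1 ↔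
      ∃ s : ℝ, (s = 1 ∨ s = -1) ∧ x = a + b + s * √((a - b) ^ 2 + 1) := by
  have hsq : (x - 2 * a) * (x - 2 * b) = 1 ↔ (x - (a + b)) ^ 2 = √((a - b) ^ 2 + 1) ^ 2 := by
    rw [Real.sq_sqrt (by positivity)]
    constructor <;> intro h <;> linarith
  rw [hsq, sq_eq_sq_iff_eq_or_eq_neg]
  simp only [sub_eq_iff_eq_add', or_and_right, exists_or, exists_eq_left, one_mul, neg_one_mul]

theorem IGraph_eigenvalues_general (n k l : ℕ) [NeZero n]
    (hk : 1 ≤ k) (hk' : 2 * k < n) (hl : 1 ≤ l) (hl' : 2 * l < n)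
    (x : ℝ) :
    (x • (1 : Matrix (ZMod n ⊕ ZMod n) (ZMod n ⊕ ZMod n) ℝ) - IGraphAdj n k l).det = 0
      ↔ ∃ j ∈ Finset.Icc 1 n, ∃ s : ℝ, (s = 1 ∨ s = -1) ∧
          x = Real.cos (2 * j * k * Real.pi / n) + Real.cos (2 * j * l * Real.pi / n)
            + s * Real.sqrt ((Real.cos (2 * j * k * Real.pi / n)
                - Real.cos (2 * j * l * Real.pi / n)) ^ 2 + 1) := by
  rw [← Complex.ofReal_eq_zero, det_smul_one_sub_IGraphAdj (ZMod.natCast_ne_neg_natCast hk hk')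
    (ZMod.natCast_ne_neg_natCast hl hl'), Finset.prod_eq_zero_iff]
  simp only [Finset.mem_univ, true_and]
  rw [ZMod.exists_iff_exists_mem_Icc_natCast]
  refine exists_congr fun j => and_congr_right fun _ => ?_
  rw [dft_circulantSymbol_natCast, dft_circulantSymbol_natCast,
    ← sub_two_mul_mul_sub_two_mul_eq_one_iff, ← sub_eq_zero (b := (1 : ℝ))]
  norm_cast

theorem IGraph_eigenvalues (n k l : ℕ) [NeZero n] (hn : 3 ≤ n)
    (hk : 1 ≤ k) (hk' : 2 * k < n) (hl : 1 ≤ l) (hl' : 2 * l < n) (hkl : k ≠ l)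
    (x : ℝ) :
    (x • (1 : Matrix (ZMod n ⊕ ZMod n) (ZMod n ⊕ ZMod n) ℝ) - IGraphAdj n k l).det = 0
      ↔ ∃ j ∈ Finset.Icc 1 n, ∃ s : ℝ, (s = 1 ∨ s = -1) ∧
          x = Real.cos (2 * j * k * Real.pi / n) + Real.cos (2 * j * l * Real.pi / n)
            + s * Real.sqrt ((Real.cos (2 * j * k * Real.pi / n)
                - Real.cos (2 * j * l * Real.pi / n)) ^ 2 + 1) :=
  IGraph_eigenvalues_general n k l hk hk' hl hl' x
end

section
/- The polynomial p_n (defined by p_0 = 1, p_1(x) = x − 2, p_{n+2} = x p_{n+1} − 2 p_n) equals the characteristic polynomial of the n×n tridiagonal matrix τ(n) with diagonal (2, 0, …, 0), superdiagonal all 1's, and subdiagonal all 2's. -/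
open Polynomial Matrix

/-- The polynomials `p₀ = 1`, `p₁ = x - 2`, `p_{n+2} = x p_{n+1} - 2 p_n`. -/
noncomputable def pSeq : ℕ → Polynomial ℝ
  | 0 => 1
  | 1 => Polynomial.X - 2
  | n + 2 => Polynomial.X * pSeq (n + 1) - 2 * pSeq n

/-- The `n × n` tridiagonal matrix with diagonal `(2,0,…,0)`,
superdiagonal all `1`'s and subdiagonal all `2`'s. -/
def tau (n : ℕ) : Matrix (Fin n) (Fin n) ℝ :=
  fun i j =>
    if i = j then (if i.val = 0 then 2 else 0)
    else if i.val + 1 = j.val then 1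
    else if j.val + 1 = i.val then 2
    else 0

/-! Expanding `det (X - τ(n+2))` along its last row, and the resulting minor along its last
column, gives `χ_{n+2} = X χ_{n+1} - 1 · 2 · χ_n`, since the only entries of the last row and
column off the diagonal are the `2` below and the `1` above it. Together with `χ_0 = 1` and
`χ_1 = X - 2` this is the recurrence defining `p_n`. -/

section Tridiagonal

variable {R : Type*} [CommRing R] {n : ℕ}

theorem det_succ_of_lastCol_eq_zero (B : Matrix (Fin (n + 1)) (Fin (n + 1)) R)
    (hcol : ∀ i : Fin n, B i.castSucc (Fin.last n) = 0) :
    B.det = B (Fin.last n) (Fin.last n) * (B.submatrix Fin.castSucc Fin.castSucc).det := by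
  rw [det_succ_column B (Fin.last n), Fin.sum_univ_castSucc,
    Finset.sum_eq_zero fun i _ => by rw [hcol i, mul_zero, zero_mul], zero_add,
    Fin.succAbove_last, Even.neg_one_pow ⟨_, rfl⟩, one_mul]

theorem det_succ_succ_of_lastRow_lastCol_eq_zero (M : Matrix (Fin (n + 2)) (Fin (n + 2)) R)
    (hrow : ∀ j : Fin n, M (Fin.last _) j.castSucc.castSucc = 0)
    (hcol : ∀ i : Fin n, M i.castSucc.castSucc (Fin.last _) = 0) :
    M.det = M (Fin.last _) (Fin.last _) * (M.submatrix Fin.castSucc Fin.castSucc).det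
      - M (Fin.last _) (Fin.last n).castSucc * M (Fin.last n).castSucc (Fin.last _)
        * (M.submatrix (Fin.castSucc ∘ Fin.castSucc) (Fin.castSucc ∘ Fin.castSucc)).det := by
  have hminor : (M.submatrix Fin.castSucc (Fin.last n).castSucc.succAbove).det =
      M (Fin.last n).castSucc (Fin.last _) *
        (M.submatrix (Fin.castSucc ∘ Fin.castSucc) (Fin.castSucc ∘ Fin.castSucc)).det := by
    have hlast : (Fin.last n).castSucc.succAbove (Fin.last n) = Fin.last (n + 1) :=
      Fin.succAbove_castSucc_self _
    have hinit : (Fin.last n).castSucc.succAbove ∘ Fin.castSucc =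
        (Fin.castSucc ∘ Fin.castSucc : Fin n → Fin (n + 2)) :=
      funext fun j => Fin.succAbove_of_castSucc_lt _ _
        (Fin.castSucc_lt_castSucc_iff.2 j.castSucc_lt_last)
    rw [det_succ_of_lastCol_eq_zero _ fun i => by simp only [submatrix_apply, hlast, hcol],
      submatrix_apply, hlast, submatrix_submatrix, hinit]
  rw [det_succ_row M (Fin.last (n + 1)), Fin.sum_univ_castSucc, Fin.sum_univ_castSucc,
    Finset.sum_eq_zero fun j _ => by rw [hrow j, mul_zero, zero_mul], zero_add,
    Fin.succAbove_last, hminor]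
  simp only [Fin.val_last, Fin.val_castSucc]
  rw [Odd.neg_one_pow ⟨n, by ring⟩, Even.neg_one_pow ⟨n + 1, rfl⟩]
  ring

end Tridiagonal

theorem charmatrix_submatrix {R ι κ : Type*} [CommRing R] [DecidableEq ι] [Fintype ι]
    [DecidableEq κ] [Fintype κ] (M : Matrix ι ι R) {e : κ → ι} (he : Function.Injective e) :
    charmatrix (M.submatrix e e) = (charmatrix M).submatrix e e := by
  ext i j : 1
  obtain rfl | hij := eq_or_ne i j
  · simp
  · simp [charmatrix_apply_ne _ _ _ hij, charmatrix_apply_ne _ _ _ (he.ne hij)]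

theorem tau_apply_eq_zero {n : ℕ} {i j : Fin n} (h : i.val + 2 ≤ j.val ∨ j.val + 2 ≤ i.val) :
    tau n i j = 0 := by
  simp only [tau, Fin.ext_iff]
  rw [if_neg, if_neg, if_neg] <;> omega

theorem charmatrix_tau_apply_eq_zero {n : ℕ} {i j : Fin n}
    (h : i.val + 2 ≤ j.val ∨ j.val + 2 ≤ i.val) : charmatrix (tau n) i j = 0 := by
  rw [charmatrix_apply_ne _ _ _ (by rintro rfl; omega), tau_apply_eq_zero h, map_zero, neg_zero]

theorem tau_submatrix_castSucc (n : ℕ) :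
    (tau (n + 1)).submatrix Fin.castSucc Fin.castSucc = tau n := by
  ext i j
  simp [tau, Fin.ext_iff]

theorem charpoly_tau_add_two (n : ℕ) :
    (tau (n + 2)).charpoly = X * (tau (n + 1)).charpoly - 2 * (tau n).charpoly := by
  have hsub (m : ℕ) : (charmatrix (tau (m + 1))).submatrix Fin.castSucc Fin.castSucc =
      charmatrix (tau m) := by
    rw [← charmatrix_submatrix _ (Fin.castSucc_injective _), tau_submatrix_castSucc]
  have hdiag : charmatrix (tau (n + 2)) (Fin.last _) (Fin.last _) = X := by
    simp [tau]
  have hsubdiag : charmatrix (tau (n + 2)) (Fin.last _) (Fin.last n).castSucc = -2 := by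
    have : n + 1 + 1 ≠ n := by omega
    simp [tau, Fin.ext_iff, this, map_ofNat]
  have hsupdiag : charmatrix (tau (n + 2)) (Fin.last n).castSucc (Fin.last _) = -1 := by
    simp [tau, Fin.ext_iff]
  rw [charpoly, det_succ_succ_of_lastRow_lastCol_eq_zero _
      (fun j => charmatrix_tau_apply_eq_zero (by simp))
      (fun i => charmatrix_tau_apply_eq_zero (by simp)),
    ← submatrix_submatrix, hsub, hsub, hdiag, hsubdiag, hsupdiag, charpoly, charpoly]
  ring

theorem pSeq_eq_charpoly_tau (n : ℕ) : (tau n).charpoly = pSeq n := by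
  induction n using Nat.twoStepInduction with
  | zero => simp [pSeq]
  | one => simp [charpoly, tau, pSeq, map_ofNat]
  | more n ih1 ih2 => rw [charpoly_tau_add_two, ih1, ih2, pSeq]
end

section
/- For each j with 1 ≤ j ≤ 7, the determinant of the 4×4 matrix with first row (x, −1, −1, −1), first column (x, −1, −1, −1)ᵀ, and diagonal (x, x − 2cos(2πj/7), x − 2cos(4πj/7), x − 2cos(6πj/7)) with all remaining entries zero, multiplied over j = 1,…,7, equals (x−3)(x−2)²(x+1)·((x−2)(x+1)(x²+2x−1))⁶. -/
open Matrix Real Finset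

/-!
Each determinant is that of an arrow matrix, `x ∏ (x - d_k) - ∑_k ∏_{i ≠ k} (x - d_i)`, so it
depends only on the elementary symmetric functions of `d_k = 2 cos (2πjk/7)`, `k = 1, 2, 3`.
For `j = 7` all `d_k` equal `2`. Otherwise `t = 2 cos (2πj/7)` is a root of `t³ + t² - 2t - 1`
(the Dirichlet kernel `1 + 2 ∑_{k ≤ 3} cos kθ` vanishes at `θ = 2πj/7`), and the `d_k` are the
Chebyshev values `t, t² - 2, t³ - 3t`, which are the three roots of that cubic, so their
elementary symmetric functions are `-1, -2, 1`.
-/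

def arrowMatrix {R : Type*} [CommRing R] (x : R) (d : ℕ → R) : Matrix (Fin 4) (Fin 4) R :=
  of fun a b => if a = b then x - (if a.val = 0 then 0 else d a.val)
    else if a.val = 0 ∨ b.val = 0 then -1 else 0

theorem det_arrowMatrix {R : Type*} [CommRing R] (x : R) (d : ℕ → R) :
    (arrowMatrix x d).det = x * (x - d 1) * (x - d 2) * (x - d 3)
      - ((x - d 2) * (x - d 3) + (x - d 1) * (x - d 3) + (x - d 1) * (x - d 2)) := by
  simp [arrowMatrix, det_succ_row_zero, Fin.sum_univ_succ, Fin.succAbove]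
  ring

theorem det_arrowMatrix_expr_of_cubic_root {R : Type*} [CommRing R] (x t : R)
    (ht : t ^ 3 + t ^ 2 - 2 * t - 1 = 0) :
    x * (x - t) * (x - (t ^ 2 - 2)) * (x - (t ^ 3 - 3 * t))
      - ((x - (t ^ 2 - 2)) * (x - (t ^ 3 - 3 * t)) + (x - t) * (x - (t ^ 3 - 3 * t))
        + (x - t) * (x - (t ^ 2 - 2)))
      = (x - 2) * (x + 1) * (x ^ 2 + 2 * x - 1) := by
  linear_combination
    (-x ^ 3 + (t ^ 2 - 2) * x ^ 2 + (-t ^ 3 + t ^ 2 + 2 * t + 1) * x - t ^ 2 + 2) * ht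

theorem sin_half_mul_one_add_two_sum_cos (θ : ℝ) (n : ℕ) :
    sin (θ / 2) * (1 + 2 * ∑ k ∈ Icc 1 n, cos (k * θ)) = sin ((2 * n + 1) * θ / 2) := by
  induction n with
  | zero => simp
  | succ n ih =>
    have h := two_mul_sin_mul_cos (θ / 2) ((n + 1) * θ)
    rw [show θ / 2 - (n + 1) * θ = -((2 * n + 1) * θ / 2) by ring, sin_neg, ← ih,
      show θ / 2 + (n + 1) * θ = (2 * (n + 1) + 1) * θ / 2 by ring] at h
    rw [sum_Icc_succ_top (by omega)]
    push_cast at h ⊢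
    linear_combination h

theorem two_cos_cubic_of_not_dvd {j : ℕ} (hj : ¬ 7 ∣ j) :
    (2 * cos (2 * π * j / 7)) ^ 3 + (2 * cos (2 * π * j / 7)) ^ 2
      - 2 * (2 * cos (2 * π * j / 7)) - 1 = 0 := by
  set θ := 2 * π * j / 7
  have hsin : sin (θ / 2) ≠ 0 := by
    rw [Ne, sin_eq_zero_iff]
    rintro ⟨n, hn⟩
    have : (j : ℤ) = 7 * n := by
      have := mul_right_cancel₀ pi_ne_zero (show (j : ℝ) * π = (7 * n : ℝ) * π by
        rw [mul_assoc, hn]; ring)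
      exact_mod_cast this
    omega
  have hkernel : sin (θ / 2) * (1 + 2 * (cos θ + cos (2 * θ) + cos (3 * θ))) = 0 := by
    have h := sin_half_mul_one_add_two_sum_cos θ 3
    rw [show (2 * ((3 : ℕ) : ℝ) + 1) * θ / 2 = j * π by simp [θ]; ring, sin_nat_mul_pi] at h
    simpa [sum_Icc_succ_top, add_assoc] using h
  have hsum := (mul_eq_zero.mp hkernel).resolve_left hsin
  rw [cos_two_mul, cos_three_mul] at hsum
  linear_combination hsum

theorem det_arrowMatrix_two_cos_of_not_dvd (x : ℝ) {j : ℕ} (hj : ¬ 7 ∣ j) :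
    (arrowMatrix x fun k : ℕ => 2 * cos (2 * π * j * k / 7)).det
      = (x - 2) * (x + 1) * (x ^ 2 + 2 * x - 1) := by
  set θ := 2 * π * j / 7
  have h2 : 2 * cos (2 * π * j * (2 : ℕ) / 7) = (2 * cos θ) ^ 2 - 2 := by
    rw [show 2 * π * j * ((2 : ℕ) : ℝ) / 7 = 2 * θ by push_cast; ring, cos_two_mul]; ring
  have h3 : 2 * cos (2 * π * j * (3 : ℕ) / 7) = (2 * cos θ) ^ 3 - 3 * (2 * cos θ) := by
    rw [show 2 * π * j * ((3 : ℕ) : ℝ) / 7 = 3 * θ by push_cast; ring, cos_three_mul]; ring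
  rw [det_arrowMatrix, h2, h3, Nat.cast_one, mul_one]
  exact det_arrowMatrix_expr_of_cubic_root x _ (two_cos_cubic_of_not_dvd hj)

theorem det_arrowMatrix_two_cos_of_dvd (x : ℝ) {j : ℕ} (hj : 7 ∣ j) :
    (arrowMatrix x fun k : ℕ => 2 * cos (2 * π * j * k / 7)).det
      = (x - 3) * (x - 2) ^ 2 * (x + 1) := by
  obtain ⟨m, rfl⟩ := hj
  have hcos (k : ℕ) : cos (2 * π * ((7 * m : ℕ) : ℝ) * k / 7) = 1 := by
    rw [show 2 * π * ((7 * m : ℕ) : ℝ) * k / 7 = (m * k : ℕ) * (2 * π) by push_cast; ring,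
      cos_nat_mul_two_pi]
  rw [det_arrowMatrix]
  simp only [hcos]
  ring

theorem coxeter_determinant_product (x : ℝ) :
    (∏ j ∈ Finset.Icc (1 : ℕ) 7,
        (Matrix.of fun a b : Fin 4 =>
          if a = b then
            x - (if a.val = 0 then 0 else 2 * Real.cos (2 * Real.pi * j * a.val / 7))
          else if a.val = 0 ∨ b.val = 0 then (-1 : ℝ)
          else 0).det)
      = (x - 3) * (x - 2) ^ 2 * (x + 1)
        * ((x - 2) * (x + 1) * (x ^ 2 + 2 * x - 1)) ^ 6 := by
  change ∏ j ∈ Icc (1 : ℕ) (6 + 1),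
    (arrowMatrix x fun k : ℕ => 2 * cos (2 * π * j * k / 7)).det = _
  rw [prod_Icc_succ_top (by norm_num), det_arrowMatrix_two_cos_of_dvd x (dvd_refl 7),
    prod_congr rfl fun j hj => det_arrowMatrix_two_cos_of_not_dvd x (by
      rw [mem_Icc] at hj; omega), prod_const, Nat.card_Icc]
  ring
end
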